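/- Let (Ω, Σ, μ) be a σ-finite complete measure space, let 1 ≤ p < ∞, and let T : Ω → Ω be a non-singular measurable transformation. Then the composition operator C_T, defined on pairs by C_T(f₁, f₂) = (f₁ ∘ T, f₂ ∘ T), maps L^p(𝔹ℂ) boundedly into itself (i.e. there exists C > 0 such that for every f = (f₁, f₂) with f₁, f₂ ∈ L^p(μ), both fᵢ ∘ T ∈ L^p(μ) and ‖C_T f‖_{p,𝔹ℂ} ≤ C·‖f‖_{p,𝔹ℂ}) if and only if there exists M > 0 such that μ(T⁻¹(A)) ≤ M·μ(A) for all A ∈ Σ with μ(A) < ∞. -/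

import Mathlib

/-!
Testing the bound on the pair `(1_A, 0)` gives `μ(T⁻¹A)^{1/p} ≤ C μ(A)^{1/p}`, i.e. the measure
bound with `M = C^p`. Conversely, σ-finiteness upgrades the bound on sets of finite measure to
`T_*μ ≤ M μ`, so `‖f ∘ T‖_p = ‖f‖_{L^p(T_*μ)} ≤ M^{1/p} ‖f‖_p` for each component, and the
bicomplex norm is monotone and homogeneous in the pair of component norms.
-/

noncomputable section

open MeasureTheory
open scoped ENNReal NNReal

/-- The bicomplex `L^p` norm of a pair:
`‖(f₁, f₂)‖_{p,𝔹ℂ} = (1/√2)(‖f₁‖_p² + ‖f₂‖_p²)^{1/2}`. -/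
def bcLpNorm {Ω : Type*} [MeasurableSpace Ω] (μ : Measure Ω) (p : ℝ≥0∞)
    (f : (Ω → ℂ) × (Ω → ℂ)) : ℝ :=
  (1 / Real.sqrt 2) *
    Real.sqrt ((eLpNorm f.1 p μ).toReal ^ 2 + (eLpNorm f.2 p μ).toReal ^ 2)

namespace MeasureTheory

variable {α β E : Type*} [MeasurableSpace α] [MeasurableSpace β] [NormedAddCommGroup E]
  {μ : Measure α} {ν : Measure β} {T : α → β} {c : ℝ≥0∞} {p : ℝ≥0∞}

lemma Measure.map_le_smul_of_forall_measure_lt_top [SigmaFinite ν] (hT : Measurable T)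
    (h : ∀ A : Set β, MeasurableSet A → ν A < ∞ → μ (T ⁻¹' A) ≤ c * ν A) :
    μ.map T ≤ c • ν := by
  refine Measure.le_iff.2 fun A hA => ?_
  have hexhaust (ρ : Measure β) : ρ A = ⨆ n, ρ (A ∩ spanningSets ν n) := by
    have hmono : Monotone fun n => A ∩ spanningSets ν n :=
      fun _ _ hmn => Set.inter_subset_inter_right A (monotone_spanningSets ν hmn)
    rw [← hmono.directed_le.measure_iUnion, ← Set.inter_iUnion, iUnion_spanningSets,
      Set.inter_univ]
  rw [Measure.smul_apply, smul_eq_mul, hexhaust, hexhaust ν, ENNReal.mul_iSup]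
  refine iSup_mono fun n => ?_
  rw [Measure.map_apply hT (hA.inter (measurableSet_spanningSets ν n))]
  exact h _ (hA.inter (measurableSet_spanningSets ν n))
    (measure_inter_lt_top_of_right_ne_top (measure_spanningSets_lt_top ν n).ne)

lemma eLpNorm_comp_le_of_map_le_smul (hT : Measurable T) (h : μ.map T ≤ c • ν) {f : β → E}
    (hf : AEStronglyMeasurable f ν) :
    eLpNorm (f ∘ T) p μ ≤ c ^ (1 / p).toReal * eLpNorm f p ν := by
  rw [← eLpNorm_map_measure (hf.mono_ac (Measure.absolutelyContinuous_of_le_smul h))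
    hT.aemeasurable]
  exact eLpNorm_le_of_measure_le_smul h

lemma MemLp.comp_of_map_le_smul (hc : c ≠ ∞) (hT : Measurable T) (h : μ.map T ≤ c • ν)
    {f : β → E} (hf : MemLp f p ν) : MemLp (f ∘ T) p μ :=
  (memLp_map_measure_iff (hf.1.mono_ac (Measure.absolutelyContinuous_of_le_smul h))
    hT.aemeasurable).1 (hf.of_measure_le_smul hc h)

lemma measure_preimage_le_of_eLpNorm_indicator_comp_le (hT : Measurable T) (hp : p ≠ 0)
    (hp' : p ≠ ∞) {A : Set β} (hA : MeasurableSet A) {e : E} (he : e ≠ 0) {K : ℝ≥0∞}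
    (h : eLpNorm (A.indicator (fun _ => e) ∘ T) p μ ≤ K * eLpNorm (A.indicator fun _ => e) p ν) :
    μ (T ⁻¹' A) ≤ K ^ p.toReal * ν A := by
  have hq : 0 < p.toReal := ENNReal.toReal_pos hp hp'
  have hcomp : (A.indicator fun _ => e) ∘ T = (T ⁻¹' A).indicator fun _ => e := rfl
  rw [hcomp, eLpNorm_indicator_const (hT hA) hp hp',
    eLpNorm_indicator_const hA hp hp', mul_left_comm,
    ENNReal.mul_le_mul_iff_right (enorm_ne_zero.2 he) enorm_ne_top] at h
  calc μ (T ⁻¹' A) = (μ (T ⁻¹' A) ^ (1 / p.toReal)) ^ p.toReal := by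
        rw [← ENNReal.rpow_mul, one_div_mul_cancel hq.ne', ENNReal.rpow_one]
    _ ≤ (K * ν A ^ (1 / p.toReal)) ^ p.toReal := ENNReal.rpow_le_rpow h hq.le
    _ = K ^ p.toReal * ν A := by
        rw [ENNReal.mul_rpow_of_nonneg _ _ hq.le, ← ENNReal.rpow_mul, one_div_mul_cancel hq.ne',
          ENNReal.rpow_one]

end MeasureTheory

section BicomplexNorm

variable {Ω : Type*} [MeasurableSpace Ω] {μ : Measure Ω} {p : ℝ≥0∞}

lemma bcLpNorm_le_mul_of_eLpNorm_le {f₁ f₂ g₁ g₂ : Ω → ℂ} {K : ℝ≥0}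
    (hf₁ : eLpNorm f₁ p μ ≠ ∞) (hf₂ : eLpNorm f₂ p μ ≠ ∞)
    (h₁ : eLpNorm g₁ p μ ≤ K * eLpNorm f₁ p μ) (h₂ : eLpNorm g₂ p μ ≤ K * eLpNorm f₂ p μ) :
    bcLpNorm μ p (g₁, g₂) ≤ K * bcLpNorm μ p (f₁, f₂) := by
  have hsq {u v : ℝ≥0∞} (hv : v ≠ ∞) (huv : u ≤ K * v) : u.toReal ^ 2 ≤ K ^ 2 * v.toReal ^ 2 := by
    rw [← mul_pow]
    gcongr
    simpa using ENNReal.toReal_mono (ENNReal.mul_ne_top ENNReal.coe_ne_top hv) huv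
  unfold bcLpNorm
  rw [mul_left_comm, ← Real.sqrt_sq K.coe_nonneg, ← Real.sqrt_mul (sq_nonneg _)]
  gcongr
  linarith [hsq hf₁ h₁, hsq hf₂ h₂]

lemma eLpNorm_le_of_bcLpNorm_mk_zero_le {f g : Ω → ℂ} {C : ℝ} (hC : 0 ≤ C)
    (hf : eLpNorm f p μ ≠ ∞) (hg : eLpNorm g p μ ≠ ∞)
    (h : bcLpNorm μ p (g, 0) ≤ C * bcLpNorm μ p (f, 0)) :
    eLpNorm g p μ ≤ ENNReal.ofReal C * eLpNorm f p μ := by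
  simp only [bcLpNorm, eLpNorm_zero, ENNReal.toReal_zero, zero_pow two_ne_zero, add_zero,
    Real.sqrt_sq ENNReal.toReal_nonneg, mul_left_comm C] at h
  rw [← ENNReal.toReal_le_toReal hg (ENNReal.mul_ne_top ENNReal.ofReal_ne_top hf),
    ENNReal.toReal_mul, ENNReal.toReal_ofReal hC]
  exact le_of_mul_le_mul_left h (by positivity)

end BicomplexNorm

theorem bicomplex_Lp_composition_bounded_iff_general {Ω : Type*} [MeasurableSpace Ω]
    (μ : Measure Ω) [SigmaFinite μ]
    (p : ℝ≥0∞) (hp : 1 ≤ p) (hp' : p ≠ ⊤)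
    (T : Ω → Ω) (hTm : Measurable T) :
    (∃ C : ℝ, 0 < C ∧ ∀ f₁ f₂ : Ω → ℂ, MemLp f₁ p μ → MemLp f₂ p μ →
        MemLp (f₁ ∘ T) p μ ∧ MemLp (f₂ ∘ T) p μ ∧
          bcLpNorm μ p (f₁ ∘ T, f₂ ∘ T) ≤ C * bcLpNorm μ p (f₁, f₂)) ↔
      (∃ M : ℝ≥0, 0 < M ∧ ∀ A : Set Ω, MeasurableSet A → μ A < ⊤ →
        μ (T ⁻¹' A) ≤ (M : ℝ≥0∞) * μ A) := by
  constructor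
  · rintro ⟨C, hC, hbd⟩
    refine ⟨C.toNNReal ^ p.toReal, NNReal.rpow_pos (Real.toNNReal_pos.2 hC),
      fun A hA hAfin => ?_⟩
    have hf : MemLp (A.indicator fun _ => (1 : ℂ)) p μ :=
      memLp_indicator_const p hA 1 (Or.inr hAfin.ne)
    obtain ⟨hfT, -, hle⟩ := hbd _ 0 hf MemLp.zero
    rw [ENNReal.coe_rpow_of_nonneg _ ENNReal.toReal_nonneg]
    exact measure_preimage_le_of_eLpNorm_indicator_comp_le hTm (zero_lt_one.trans_le hp).ne' hp' hA
      one_ne_zero (eLpNorm_le_of_bcLpNorm_mk_zero_le hC.le hf.eLpNorm_ne_top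
        hfT.eLpNorm_ne_top hle)
  · rintro ⟨M, hM, hMA⟩
    have hmap := Measure.map_le_smul_of_forall_measure_lt_top hTm hMA
    have hcomp (f : Ω → ℂ) (hf : MemLp f p μ) :
        eLpNorm (f ∘ T) p μ ≤ ↑(M ^ (1 / p).toReal) * eLpNorm f p μ := by
      rw [ENNReal.coe_rpow_of_nonneg _ ENNReal.toReal_nonneg]
      exact eLpNorm_comp_le_of_map_le_smul hTm hmap hf.1
    refine ⟨M ^ (1 / p).toReal, NNReal.rpow_pos hM, fun f₁ f₂ h₁ h₂ =>
      ⟨h₁.comp_of_map_le_smul ENNReal.coe_ne_top hTm hmap,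
        h₂.comp_of_map_le_smul ENNReal.coe_ne_top hTm hmap,
        bcLpNorm_le_mul_of_eLpNorm_le h₁.eLpNorm_ne_top h₂.eLpNorm_ne_top
          (hcomp f₁ h₁) (hcomp f₂ h₂)⟩⟩

/-- For a non-singular measurable transformation `T` of a σ-finite complete measure
space and `1 ≤ p < ∞`, the composition operator `C_T(f₁, f₂) = (f₁ ∘ T, f₂ ∘ T)` maps
`L^p(𝔹ℂ)` boundedly into itself iff there is `M > 0` with `μ(T⁻¹(A)) ≤ M·μ(A)` for
all `A ∈ Σ` of finite measure. -/
theorem bicomplex_Lp_composition_bounded_iff {Ω : Type*} [MeasurableSpace Ω]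
    (μ : Measure Ω) [SigmaFinite μ] (hμ : μ.IsComplete)
    (p : ℝ≥0∞) (hp : 1 ≤ p) (hp' : p ≠ ⊤)
    (T : Ω → Ω) (hTm : Measurable T)
    (hns : ∀ A : Set Ω, MeasurableSet A → μ A = 0 → μ (T ⁻¹' A) = 0) :
    (∃ C : ℝ, 0 < C ∧ ∀ f₁ f₂ : Ω → ℂ, MemLp f₁ p μ → MemLp f₂ p μ →
        MemLp (f₁ ∘ T) p μ ∧ MemLp (f₂ ∘ T) p μ ∧
          bcLpNorm μ p (f₁ ∘ T, f₂ ∘ T) ≤ C * bcLpNorm μ p (f₁, f₂)) ↔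
      (∃ M : ℝ≥0, 0 < M ∧ ∀ A : Set Ω, MeasurableSet A → μ A < ⊤ →
        μ (T ⁻¹' A) ≤ (M : ℝ≥0∞) * μ A) :=
  bicomplex_Lp_composition_bounded_iff_general μ p hp hp' T hTm
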